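/- arXiv:2412.12950 — 3 statements merged into one kernel-verified Lean document; each statement's English description precedes it below -/
import Mathlib

section
/- Let n ≥ 3 and μ ∈ (0, n). There exists a constant c_{n,μ} > 0, depending only on n and μ, such that for all a ∈ ℝⁿ, λ > 0, and x ∈ ℝⁿ: ∫_{ℝⁿ} δ_{(a,λ)}(y)^{2*_μ} |x−y|^{−μ} dy = c_{n,μ} · δ_{(a,λ)}(x)^{μ/(n−2)}. -/
/-!
Put `s = n - μ/2` and `p = μ/2`, so that `s + p = n`. The substitution `y = a + z/λ` reduces the
claim to `∫ (1 + |z|²)^{-s} |X - z|^{-2p} dz = c (1 + |X|²)^{-p}` with `X = λ(x - a)`.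
Writing both factors as Gamma integrals, `Γ(s) A^{-s} = ∫₀^∞ t^{s-1} e^{-tA} dt`, Tonelli leaves
an explicit Gaussian convolution in `z`. In the remaining integral over the Schwinger parameters
`(t, u)` the substitution `u = tv` separates the variables precisely because `s + p = n`: the
`t`-integral is again a Gamma integral, leaving `∫₀^∞ v^{p-1} (1 + (1 + |X|²) v)^{-n/2} dv`, and
scaling `v` by `1 + |X|²` extracts the factor `(1 + |X|²)^{-p}` in front of a Beta integral.
-/

open MeasureTheory

noncomputable section

/-- The standard bubble `δ_{(a,λ)}(x) = λ^{(n−2)/2}/(1+λ²|x−a|²)^{(n−2)/2}`. -/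
def bubble (n : ℕ) (a : EuclideanSpace ℝ (Fin n)) (l : ℝ)
    (x : EuclideanSpace ℝ (Fin n)) : ℝ :=
  l ^ (((n : ℝ) - 2) / 2) / (1 + l ^ 2 * ‖x - a‖ ^ 2) ^ (((n : ℝ) - 2) / 2)

open Set Real
open scoped ENNReal

theorem lintegral_comp_mul_left_Ioi {b : ℝ} (hb : 0 < b) (f : ℝ → ℝ≥0∞) :
    ∫⁻ x in Ioi 0, f (b * x) = ENNReal.ofReal b⁻¹ * ∫⁻ x in Ioi 0, f x := by
  have hmap : (volume.restrict (Ioi (0:ℝ))).map (b * ·) =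
      ENNReal.ofReal b⁻¹ • volume.restrict (Ioi 0) := by
    have hpre : (b * ·) ⁻¹' Ioi 0 = Ioi (0:ℝ) := by
      ext x; simp [hb]
    rw [← hpre, ← Measure.restrict_map (measurable_const_mul b) measurableSet_Ioi,
      Real.map_volume_mul_left hb.ne', hpre, Measure.restrict_smul, abs_of_pos (inv_pos.2 hb)]
  calc ∫⁻ x in Ioi 0, f (b * x) = ∫⁻ y, f y ∂(volume.restrict (Ioi 0)).map (b * ·) :=
        ((Homeomorph.mulLeft₀ b hb.ne').measurableEmbedding.lintegral_map f).symm
    _ = ENNReal.ofReal b⁻¹ * ∫⁻ x in Ioi 0, f x := by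
        rw [hmap, lintegral_smul_measure, smul_eq_mul]

theorem lintegral_rpow_mul_exp_neg_mul_Ioi {a r : ℝ} (ha : 0 < a) (hr : 0 < r) :
    ∫⁻ t in Ioi 0, ENNReal.ofReal (t ^ (a - 1) * exp (-(r * t))) =
      ENNReal.ofReal (Gamma a * r ^ (-a)) := by
  have hint : IntegrableOn (fun t : ℝ ↦ t ^ (a - 1) * exp (-(r * t))) (Ioi 0) := by
    simpa [neg_mul] using integrableOn_rpow_mul_exp_neg_mul_rpow (p := 1) (by linarith) one_pos hr
  rw [← ofReal_integral_eq_lintegral_ofReal hint, integral_rpow_mul_exp_neg_mul_Ioi ha hr,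
    one_div, inv_rpow hr.le, rpow_neg hr.le, mul_comm]
  filter_upwards [ae_restrict_mem measurableSet_Ioi] with t (ht : 0 < t)
  positivity

theorem lintegral_rpow_mul_comp_mul_left_Ioi {b : ℝ} (hb : 0 < b) (p : ℝ) (f : ℝ → ℝ) :
    ∫⁻ x in Ioi 0, ENNReal.ofReal (x ^ (p - 1) * f (b * x)) =
      ENNReal.ofReal (b ^ (-p)) * ∫⁻ x in Ioi 0, ENNReal.ofReal (x ^ (p - 1) * f x) := by
  have hscale : ∀ x ∈ Ioi (0:ℝ), ENNReal.ofReal (x ^ (p - 1) * f (b * x)) =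
      ENNReal.ofReal (b ^ (1 - p)) * ENNReal.ofReal ((b * x) ^ (p - 1) * f (b * x)) := by
    intro x (hx : 0 < x)
    rw [← ENNReal.ofReal_mul (by positivity), mul_rpow hb.le hx.le, ← mul_assoc, ← mul_assoc,
      ← rpow_add hb, show 1 - p + (p - 1) = 0 by ring, rpow_zero, one_mul]
  rw [setLIntegral_congr_fun measurableSet_Ioi hscale,
    lintegral_const_mul' _ _ ENNReal.ofReal_ne_top,
    lintegral_comp_mul_left_Ioi hb (fun y ↦ ENNReal.ofReal (y ^ (p - 1) * f y)), ← mul_assoc,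
    ← ENNReal.ofReal_mul (by positivity), ← rpow_neg_one, ← rpow_add hb]
  ring_nf

theorem integrableOn_rpow_mul_one_add_rpow_neg {p q : ℝ} (hp : 0 < p) (hpq : p < q) :
    IntegrableOn (fun w : ℝ ↦ w ^ (p - 1) * (1 + w) ^ (-q)) (Ioi 0) := by
  have hmeas : AEStronglyMeasurable (fun w : ℝ ↦ w ^ (p - 1) * (1 + w) ^ (-q))
      (volume.restrict (Ioi 0)) := by
    apply Measurable.aestronglyMeasurable; fun_prop
  rw [← Ioc_union_Ioi_eq_Ioi zero_le_one, integrableOn_union]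
  constructor
  · have hbase : IntegrableOn (fun w : ℝ ↦ w ^ (p - 1)) (Ioc 0 1) := by
      rw [← intervalIntegrable_iff_integrableOn_Ioc_of_le zero_le_one]
      exact intervalIntegral.intervalIntegrable_rpow' (by linarith)
    refine hbase.mono' (hmeas.mono_set Ioc_subset_Ioi_self) ?_
    filter_upwards [ae_restrict_mem measurableSet_Ioc] with w ⟨hw0, _⟩
    rw [norm_of_nonneg (by positivity)]
    exact mul_le_of_le_one_right (by positivity)
      (rpow_le_one_of_one_le_of_nonpos (by linarith) (by linarith))
  · have hbase : IntegrableOn (fun w : ℝ ↦ w ^ (p - 1 - q)) (Ioi 1) :=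
      integrableOn_Ioi_rpow_of_lt (by linarith) one_pos
    refine hbase.mono' (hmeas.mono_set (Ioi_subset_Ioi zero_le_one)) ?_
    filter_upwards [ae_restrict_mem measurableSet_Ioi] with w (hw : 1 < w)
    have hw0 : 0 < w := by linarith
    rw [norm_of_nonneg (by positivity), sub_eq_add_neg (p - 1), rpow_add hw0]
    exact mul_le_mul_of_nonneg_left (rpow_le_rpow_of_nonpos hw0 (by linarith) (by linarith))
      (by positivity)

theorem setIntegral_rpow_mul_one_add_rpow_neg_pos {p q : ℝ} (hp : 0 < p) (hpq : p < q) :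
    0 < ∫ w in Ioi (0:ℝ), w ^ (p - 1) * (1 + w) ^ (-q) := by
  have hpos : ∀ w ∈ Ioi (0:ℝ), 0 < w ^ (p - 1) * (1 + w) ^ (-q) := fun w (hw : 0 < w) ↦ by
    positivity
  rw [setIntegral_pos_iff_support_of_nonneg_ae
    ((ae_restrict_mem measurableSet_Ioi).mono fun w hw ↦ (hpos w hw).le)
    (integrableOn_rpow_mul_one_add_rpow_neg hp hpq)]
  calc (0 : ℝ≥0∞) < volume (Ioi (0:ℝ)) := by simp
    _ ≤ _ := measure_mono fun w hw ↦ by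
      exact ⟨Function.mem_support.2 (hpos w hw).ne', hw⟩

-- The substitution `u = t v`; since `s + p = 2m`, the powers of `t` combine to `t ^ (m - 1)`.
theorem lintegral_schwinger_slice_eq {m s p K t : ℝ} (ht : 0 < t) (hspm : s + p = 2 * m) :
    ∫⁻ u in Ioi 0, ENNReal.ofReal (u ^ (p - 1) *
        (t ^ (s - 1) * exp (-t) * ((π / (t + u)) ^ m * exp (-(t * u / (t + u) * K))))) =
      ∫⁻ v in Ioi 0, ENNReal.ofReal (π ^ m * (v ^ (p - 1) * (1 + v) ^ (-m)) *
        (t ^ (m - 1) * exp (-((1 + v * K / (1 + v)) * t)))) := by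
  have hscale := lintegral_rpow_mul_comp_mul_left_Ioi ht p fun u ↦
    t ^ (s - 1) * exp (-t) * ((π / (t + u)) ^ m * exp (-(t * u / (t + u) * K)))
  have hcancel : ENNReal.ofReal (t ^ p) * ENNReal.ofReal (t ^ (-p)) = 1 := by
    rw [← ENNReal.ofReal_mul (by positivity), ← rpow_add ht, add_neg_cancel, rpow_zero,
      ENNReal.ofReal_one]
  rw [← one_mul (lintegral _ _), ← hcancel, mul_assoc, ← hscale,
    ← lintegral_const_mul' _ _ ENNReal.ofReal_ne_top]
  refine setLIntegral_congr_fun measurableSet_Ioi fun v (hv : 0 < v) ↦ ?_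
  rw [← ENNReal.ofReal_mul (by positivity)]
  congr 1
  have hpow : t ^ (m - 1) = t ^ p * t ^ (s - 1) * t ^ (-m) := by
    rw [← rpow_add ht, ← rpow_add ht]; congr 1; linarith
  have hexp : exp (-((1 + v * K / (1 + v)) * t)) =
      exp (-t) * exp (-(t * (t * v) / (t + t * v) * K)) := by
    rw [← exp_add]; congr 1; field_simp; ring
  have hfrac : (π / (t + t * v)) ^ m = π ^ m * (t ^ (-m) * (1 + v) ^ (-m)) := by
    rw [show t + t * v = t * (1 + v) by ring, div_eq_mul_inv, mul_inv, mul_rpow pi_pos.le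
      (by positivity), mul_rpow (by positivity) (by positivity), inv_rpow ht.le,
      inv_rpow (by positivity), rpow_neg ht.le, rpow_neg (by positivity)]
  rw [hpow, hexp, hfrac]
  ring

theorem lintegral_schwinger_eq {m s p K : ℝ} (hm : 0 < m)
    (hspm : s + p = 2 * m) (hK : 0 ≤ K) :
    ∫⁻ t in Ioi 0, ∫⁻ u in Ioi 0, ENNReal.ofReal (u ^ (p - 1) *
        (t ^ (s - 1) * exp (-t) * ((π / (t + u)) ^ m * exp (-(t * u / (t + u) * K))))) =
      ENNReal.ofReal (π ^ m * Gamma m) *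
        ∫⁻ v in Ioi 0, ENNReal.ofReal (v ^ (p - 1) * (1 + (1 + K) * v) ^ (-m)) := by
  have hgamma : ∀ v ∈ Ioi (0:ℝ), ∫⁻ t in Ioi 0, ENNReal.ofReal (π ^ m * (v ^ (p - 1) *
        (1 + v) ^ (-m)) * (t ^ (m - 1) * exp (-((1 + v * K / (1 + v)) * t)))) =
      ENNReal.ofReal (π ^ m * Gamma m) *
        ENNReal.ofReal (v ^ (p - 1) * (1 + (1 + K) * v) ^ (-m)) := by
    intro v (hv : 0 < v)
    have hM : 0 < 1 + v * K / (1 + v) := by positivity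
    simp_rw [ENNReal.ofReal_mul (by positivity : 0 ≤ π ^ m * (v ^ (p - 1) * (1 + v) ^ (-m)))]
    rw [lintegral_const_mul' _ _ ENNReal.ofReal_ne_top, lintegral_rpow_mul_exp_neg_mul_Ioi hm hM,
      ← ENNReal.ofReal_mul (by positivity), ← ENNReal.ofReal_mul (by positivity)]
    congr 1
    have hMv : (1 + v) * (1 + v * K / (1 + v)) = 1 + (1 + K) * v := by
      field_simp; ring
    rw [← hMv, mul_rpow (by positivity) hM.le]
    ring
  rw [setLIntegral_congr_fun measurableSet_Ioi fun t (ht : 0 < t) ↦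
      lintegral_schwinger_slice_eq ht hspm, lintegral_lintegral_swap (by fun_prop),
    setLIntegral_congr_fun measurableSet_Ioi hgamma, lintegral_const_mul' _ _ ENNReal.ofReal_ne_top]

theorem ae_restrict_Ioi_prod_mem :
    ∀ᵐ q ∂(volume.restrict (Ioi (0:ℝ))).prod (volume.restrict (Ioi (0:ℝ))),
      q ∈ Ioi 0 ×ˢ Ioi 0 := by
  rw [Measure.prod_restrict]
  exact ae_restrict_mem (measurableSet_Ioi.prod measurableSet_Ioi)

theorem ofReal_gamma_mul_gamma_mul_eq_lintegral_prod {s μ a r : ℝ} (hs : 0 < s) (hμ : 0 < μ)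
    (ha : 0 ≤ a) (hr : 0 < r) :
    ENNReal.ofReal (Gamma s * Gamma (μ / 2)) * ENNReal.ofReal ((1 + a) ^ (-s) * r ^ (-μ)) =
      ∫⁻ q, ENNReal.ofReal (q.2 ^ (μ / 2 - 1) * (q.1 ^ (s - 1) * exp (-q.1))) *
        ENNReal.ofReal (exp (-(q.1 * a)) * exp (-(q.2 * r ^ 2)))
        ∂(volume.restrict (Ioi 0)).prod (volume.restrict (Ioi 0)) := by
  have hr2 : r ^ (-μ) = (r ^ 2) ^ (-(μ / 2)) := by
    rw [← rpow_natCast, ← rpow_mul hr.le]; congr 1; push_cast; ring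
  calc _ = ENNReal.ofReal (Gamma s * (1 + a) ^ (-s)) *
        ENNReal.ofReal (Gamma (μ / 2) * (r ^ 2) ^ (-(μ / 2))) := by
        rw [← ENNReal.ofReal_mul (by positivity), ← ENNReal.ofReal_mul (by positivity), hr2]
        ring_nf
    _ = (∫⁻ t in Ioi 0, ENNReal.ofReal (t ^ (s - 1) * exp (-((1 + a) * t)))) *
        ∫⁻ u in Ioi 0, ENNReal.ofReal (u ^ (μ / 2 - 1) * exp (-(r ^ 2 * u))) := by
        rw [lintegral_rpow_mul_exp_neg_mul_Ioi hs (by positivity),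
          lintegral_rpow_mul_exp_neg_mul_Ioi (by positivity) (by positivity)]
    _ = _ := by
        rw [← lintegral_prod_mul (by fun_prop) (by fun_prop)]
        refine lintegral_congr_ae ((ae_restrict_Ioi_prod_mem).mono
          fun q ⟨(h1 : 0 < q.1), (h2 : 0 < q.2)⟩ ↦ ?_)
        dsimp only
        rw [← ENNReal.ofReal_mul (by positivity), ← ENNReal.ofReal_mul (by positivity)]
        congr 1
        rw [show -((1 + a) * q.1) = -q.1 + -(q.1 * a) by ring, exp_add, mul_comm (r ^ 2)]
        ring

/-- The constant `c_{n,μ}`; the integral is the Beta function `B(μ/2, (d - μ)/2)`. -/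
def bubbleRieszConst (d μ : ℝ) : ℝ :=
  π ^ (d / 2) * Gamma (d / 2) * (∫ w in Ioi (0:ℝ), w ^ (μ / 2 - 1) * (1 + w) ^ (-(d / 2))) /
    (Gamma (d - μ / 2) * Gamma (μ / 2))

theorem bubbleRieszConst_pos {d μ : ℝ} (hμ : 0 < μ) (hμd : μ < d) : 0 < bubbleRieszConst d μ := by
  have hB := setIntegral_rpow_mul_one_add_rpow_neg_pos (p := μ / 2) (q := d / 2) (by linarith)
    (by linarith)
  have : 0 < Gamma (d - μ / 2) := Gamma_pos_of_pos (by linarith)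
  have : 0 < Gamma (μ / 2) := Gamma_pos_of_pos (by linarith)
  have : 0 < Gamma (d / 2) := Gamma_pos_of_pos (by linarith)
  unfold bubbleRieszConst
  positivity

section InnerProductSpace

variable {V : Type*} [NormedAddCommGroup V] [InnerProductSpace ℝ V] [FiniteDimensional ℝ V]
  [MeasurableSpace V] [BorelSpace V]

theorem integrable_exp_neg_mul_sq_norm {b : ℝ} (hb : 0 < b) :
    Integrable fun z : V ↦ exp (-b * ‖z‖ ^ 2) := by
  refine (GaussianFourier.integrable_cexp_neg_mul_sq_norm_add (b := b) hb 0 (0 : V)).norm.congr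
    (.of_forall fun z ↦ ?_)
  simp [Complex.norm_exp, ← Complex.ofReal_pow]

theorem lintegral_exp_neg_mul_sq_norm_mul_exp_neg_mul_sq_norm_sub {t u : ℝ} (ht : 0 < t)
    (hu : 0 < u) (x : V) :
    ∫⁻ z, ENNReal.ofReal (exp (-(t * ‖z‖ ^ 2)) * exp (-(u * ‖x - z‖ ^ 2))) =
      ENNReal.ofReal ((π / (t + u)) ^ (Module.finrank ℝ V / 2 : ℝ) *
        exp (-(t * u / (t + u) * ‖x‖ ^ 2))) := by
  have htu : 0 < t + u := by linarith
  set c : V := (u / (t + u)) • x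
  -- completing the square around `c`
  have hsq : ∀ z : V, exp (-(t * ‖z‖ ^ 2)) * exp (-(u * ‖x - z‖ ^ 2)) =
      exp (-(t + u) * ‖z - c‖ ^ 2) * exp (-(t * u / (t + u) * ‖x‖ ^ 2)) := by
    intro z
    rw [← exp_add, ← exp_add]
    congr 1
    rw [norm_sub_sq_real, norm_sub_sq_real, norm_smul, real_inner_smul_right, real_inner_comm,
      mul_pow, Real.norm_eq_abs, sq_abs]
    field_simp
    ring
  have hint : Integrable fun z : V ↦ exp (-(t + u) * ‖z - c‖ ^ 2) :=
    (integrable_exp_neg_mul_sq_norm htu).comp_sub_right (f := fun z ↦ exp (-(t + u) * ‖z‖ ^ 2)) c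
  simp_rw [hsq, ENNReal.ofReal_mul (exp_pos _).le]
  rw [lintegral_mul_const' _ _ ENNReal.ofReal_ne_top, ← ofReal_integral_eq_lintegral_ofReal hint
    (.of_forall fun z ↦ (exp_pos _).le),
    integral_sub_right_eq_self (fun z : V ↦ exp (-(t + u) * ‖z‖ ^ 2)) c,
    GaussianFourier.integral_rexp_neg_mul_sq_norm htu, ← ENNReal.ofReal_mul (by positivity)]

theorem ofReal_gamma_mul_gamma_mul_lintegral_eq_lintegral_schwinger [Nontrivial V] {s μ : ℝ}
    (hs : 0 < s) (hμ : 0 < μ) (x : V) :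
    ENNReal.ofReal (Gamma s * Gamma (μ / 2)) *
        ∫⁻ z, ENNReal.ofReal ((1 + ‖z‖ ^ 2) ^ (-s) * ‖x - z‖ ^ (-μ)) =
      ∫⁻ t in Ioi 0, ∫⁻ u in Ioi 0, ENNReal.ofReal (u ^ (μ / 2 - 1) *
        (t ^ (s - 1) * exp (-t) * ((π / (t + u)) ^ (Module.finrank ℝ V / 2 : ℝ) *
          exp (-(t * u / (t + u) * ‖x‖ ^ 2))))) := by
  have hfactor : ∀ z ≠ x, _ := fun z hz ↦
    ofReal_gamma_mul_gamma_mul_eq_lintegral_prod (a := ‖z‖ ^ 2) hs hμ (by positivity)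
      (norm_pos_iff.2 (sub_ne_zero.2 hz.symm))
  have hae : ∀ᵐ z : V, z ≠ x := compl_mem_ae_iff.2 (measure_singleton x)
  set F : ℝ → ℝ → ℝ≥0∞ := fun t u ↦ ENNReal.ofReal (u ^ (μ / 2 - 1) *
    (t ^ (s - 1) * exp (-t) * ((π / (t + u)) ^ (Module.finrank ℝ V / 2 : ℝ) *
      exp (-(t * u / (t + u) * ‖x‖ ^ 2)))))
  rw [← lintegral_const_mul' _ _ ENNReal.ofReal_ne_top, lintegral_congr_ae (hae.mono hfactor),
    lintegral_lintegral_swap (by fun_prop)]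
  refine (lintegral_congr_ae ((ae_restrict_Ioi_prod_mem).mono
      fun q ⟨(h1 : 0 < q.1), (h2 : 0 < q.2)⟩ ↦ ?_)).trans
    (lintegral_prod (Function.uncurry F) (by fun_prop))
  rw [lintegral_const_mul' _ _ ENNReal.ofReal_ne_top,
    lintegral_exp_neg_mul_sq_norm_mul_exp_neg_mul_sq_norm_sub h1 h2,
    ← ENNReal.ofReal_mul (by positivity)]
  simp only [F, Function.uncurry, mul_assoc]

theorem lintegral_one_add_sq_norm_rpow_mul_norm_sub_rpow {μ : ℝ} (hμ : 0 < μ)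
    (hμd : μ < Module.finrank ℝ V) (x : V) :
    ∫⁻ z, ENNReal.ofReal ((1 + ‖z‖ ^ 2) ^ (-(Module.finrank ℝ V - μ / 2)) * ‖x - z‖ ^ (-μ)) =
      ENNReal.ofReal (bubbleRieszConst (Module.finrank ℝ V) μ * (1 + ‖x‖ ^ 2) ^ (-(μ / 2))) := by
  have hd : 0 < (Module.finrank ℝ V : ℝ) := hμ.trans hμd
  have : Nontrivial V := Module.nontrivial_of_finrank_pos (by exact_mod_cast hd)
  have hΓs : 0 < Gamma (Module.finrank ℝ V - μ / 2) := Gamma_pos_of_pos (by linarith)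
  have hΓp : 0 < Gamma (μ / 2) := Gamma_pos_of_pos (by linarith)
  have hbeta := lintegral_rpow_mul_comp_mul_left_Ioi (b := 1 + ‖x‖ ^ 2) (by positivity) (μ / 2)
    fun w ↦ (1 + w) ^ (-(Module.finrank ℝ V / 2 : ℝ))
  rw [← ENNReal.mul_right_inj (ENNReal.ofReal_pos.2 (mul_pos hΓs hΓp)).ne' ENNReal.ofReal_ne_top,
    ofReal_gamma_mul_gamma_mul_lintegral_eq_lintegral_schwinger (by linarith) hμ,
    lintegral_schwinger_eq (by positivity) (by ring) (by positivity),
    hbeta, ← ofReal_integral_eq_lintegral_ofReal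
      (integrableOn_rpow_mul_one_add_rpow_neg (by linarith) (by linarith)) ?_,
    ← ENNReal.ofReal_mul (by positivity), ← ENNReal.ofReal_mul (by positivity),
    ← ENNReal.ofReal_mul (by positivity)]
  · congr 1
    unfold bubbleRieszConst
    generalize Gamma (Module.finrank ℝ V - μ / 2) = Γs at hΓs ⊢
    field_simp
  · filter_upwards [ae_restrict_mem measurableSet_Ioi] with w (hw : 0 < w)
    positivity

theorem integral_one_add_sq_norm_rpow_mul_norm_sub_rpow {μ : ℝ} (hμ : 0 < μ)
    (hμd : μ < Module.finrank ℝ V) (x : V) :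
    ∫ z, (1 + ‖z‖ ^ 2) ^ (-(Module.finrank ℝ V - μ / 2)) * ‖x - z‖ ^ (-μ) =
      bubbleRieszConst (Module.finrank ℝ V) μ * (1 + ‖x‖ ^ 2) ^ (-(μ / 2)) := by
  have hC := bubbleRieszConst_pos hμ hμd
  rw [integral_eq_lintegral_of_nonneg_ae (.of_forall fun z ↦ by positivity) (by fun_prop),
    lintegral_one_add_sq_norm_rpow_mul_norm_sub_rpow hμ hμd, ENNReal.toReal_ofReal (by positivity)]

theorem integral_one_add_sq_mul_norm_sub_rpow_mul_norm_sub_rpow {μ l : ℝ} (hμ : 0 < μ)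
    (hμd : μ < Module.finrank ℝ V) (hl : 0 < l) (a x : V) :
    ∫ y, (1 + l ^ 2 * ‖y - a‖ ^ 2) ^ (-(Module.finrank ℝ V - μ / 2)) * ‖x - y‖ ^ (-μ) =
      l ^ (μ - Module.finrank ℝ V) * (bubbleRieszConst (Module.finrank ℝ V) μ *
        (1 + l ^ 2 * ‖x - a‖ ^ 2) ^ (-(μ / 2))) := by
  set f : V → ℝ := fun y ↦
    (1 + l ^ 2 * ‖y - a‖ ^ 2) ^ (-(Module.finrank ℝ V - μ / 2)) * ‖x - y‖ ^ (-μ)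
  have hf : ∀ z, f (a + l⁻¹ • z) = l ^ μ *
      ((1 + ‖z‖ ^ 2) ^ (-(Module.finrank ℝ V - μ / 2)) * ‖l • (x - a) - z‖ ^ (-μ)) := by
    intro z
    have hz : x - (a + l⁻¹ • z) = l⁻¹ • (l • (x - a) - z) := by
      rw [smul_sub, inv_smul_smul₀ hl.ne']; abel
    simp only [f, add_sub_cancel_left, hz, norm_smul, norm_inv, norm_of_nonneg hl.le,
      mul_rpow (inv_nonneg.2 hl.le) (norm_nonneg _), inv_rpow hl.le, rpow_neg hl.le, inv_inv]
    rw [show l ^ 2 * (l⁻¹ * ‖z‖) ^ 2 = ‖z‖ ^ 2 by field_simp]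
    ring
  have hsubst : ∫ z, f (a + l⁻¹ • z) = l ^ (Module.finrank ℝ V : ℝ) * ∫ y, f y := by
    rw [Measure.integral_comp_inv_smul_of_nonneg volume (fun z ↦ f (a + z)) hl.le,
      integral_add_left_eq_self, rpow_natCast, smul_eq_mul]
  have hX : ‖l • (x - a)‖ ^ 2 = l ^ 2 * ‖x - a‖ ^ 2 := by
    rw [norm_smul, norm_of_nonneg hl.le, mul_pow]
  simp_rw [hf, integral_const_mul, integral_one_add_sq_norm_rpow_mul_norm_sub_rpow hμ hμd, hX]
    at hsubst
  rw [rpow_sub hl, div_mul_eq_mul_div, hsubst, mul_div_cancel_left₀ _ (by positivity)]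

end InnerProductSpace

theorem bubble_rpow {n : ℕ} {a : EuclideanSpace ℝ (Fin n)} {l : ℝ} (hl : 0 < l)
    (x : EuclideanSpace ℝ (Fin n)) (e : ℝ) :
    bubble n a l x ^ e =
      l ^ (((n : ℝ) - 2) / 2 * e) * (1 + l ^ 2 * ‖x - a‖ ^ 2) ^ (-(((n : ℝ) - 2) / 2 * e)) := by
  rw [bubble, div_rpow (by positivity) (by positivity), ← rpow_mul hl.le,
    ← rpow_mul (by positivity), rpow_neg (by positivity), div_eq_mul_inv]

/-- There is a constant `c_{n,μ} > 0` such that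
`∫_{ℝⁿ} δ_{(a,λ)}(y)^{2*_μ} |x−y|^{−μ} dy = c_{n,μ} δ_{(a,λ)}(x)^{μ/(n−2)}`
for all `a`, `λ > 0` and `x`. -/
theorem bubble_riesz_potential (n : ℕ) (hn : 3 ≤ n) (μ : ℝ) (hμ0 : 0 < μ) (hμn : μ < n) :
    ∃ c : ℝ, 0 < c ∧
      ∀ (a : EuclideanSpace ℝ (Fin n)) (l : ℝ), 0 < l →
        ∀ x : EuclideanSpace ℝ (Fin n),
          (∫ y, bubble n a l y ^ ((2 * (n : ℝ) - μ) / ((n : ℝ) - 2)) * ‖x - y‖ ^ (-μ)) =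
            c * bubble n a l x ^ (μ / ((n : ℝ) - 2)) := by
  have hn2 : (n : ℝ) - 2 ≠ 0 := by
    have : (3 : ℝ) ≤ n := by exact_mod_cast hn
    linarith
  have hdim : (Module.finrank ℝ (EuclideanSpace ℝ (Fin n)) : ℝ) = n := by simp
  refine ⟨bubbleRieszConst n μ, bubbleRieszConst_pos hμ0 hμn, fun a l hl x ↦ ?_⟩
  have hsrc : ((n : ℝ) - 2) / 2 * ((2 * n - μ) / (n - 2)) = n - μ / 2 := by field_simp
  have htgt : ((n : ℝ) - 2) / 2 * (μ / (n - 2)) = μ / 2 := by field_simp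
  have hscaled := integral_one_add_sq_mul_norm_sub_rpow_mul_norm_sub_rpow
    (V := EuclideanSpace ℝ (Fin n)) hμ0 (hdim ▸ hμn) hl a x
  rw [hdim] at hscaled
  simp_rw [bubble_rpow hl, hsrc, htgt, mul_assoc, integral_const_mul, hscaled, ← mul_assoc,
    ← rpow_add hl, show (n : ℝ) - μ / 2 + (μ - n) = μ / 2 by ring]
  ring
end
end

section
/- Let n ≥ 3 and let a₁, a₂ ∈ ℝⁿ with a₁ ≠ a₂. Then, as λ → ∞, (λ |a₁−a₂|)^{n−2} · ∫_{ℝⁿ} δ_{(a₁,λ)}(x)^{(n+2)/(n−2)} δ_{(a₂,λ)}(x) dx → c₁, where c₁ = ∫_{ℝⁿ} (1+|x|²)^{−(n+2)/2} dx. -/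
/-!
Rescaling `x = a₁ + λ⁻¹ y` turns the integral into
`∫ (1 + |y|²)^{-(n+2)/2} (1 + |z + y|²)^{-(n-2)/2} dy` with `z = λ (a₁ - a₂)`, and the prefactor
`|z|^{n-2}` makes the second factor tend to `1` pointwise, so the limit follows by dominated
convergence. Where `|z| ≥ 2|y|` the second factor is at most `(2/|z|)^{n-2}`. Where `|z| ≤ 2|y|`,
split `y = s + w` with `s ∈ ℝ (a₁ - a₂)` and `w ⊥ a₁ - a₂`: then `|z + y| ≥ |w|` and
`(1 + |y|²)² ≥ (1 + |s|²)(1 + |w|²)`, so the integrand is at most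
`2^{n-2} (1 + |s|²)⁻¹ (1 + |w|²)^{-n/2}`, which is integrable over `ℝ × ℝ^{n-1}`.
-/

open MeasureTheory Filter

noncomputable section

open Module Topology

theorem rpow_mul_rpow_neg_half_eq {R B : ℝ} (hR : 0 ≤ R) (hB : 0 ≤ B) (s : ℝ) :
    R ^ s * B ^ (-(s / 2)) = (R ^ 2 / B) ^ (s / 2) := by
  rw [Real.div_rpow (by positivity) hB, ← Real.rpow_natCast, ← Real.rpow_mul hR,
    Nat.cast_ofNat, mul_div_cancel₀ s two_ne_zero, Real.rpow_neg hB, ← div_eq_mul_inv]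

theorem rpow_mul_rpow_neg_half_le {R B c s : ℝ} (hR : 0 ≤ R) (hB : 0 < B) (hc : 0 ≤ c)
    (hs : 0 ≤ s) (h : R ^ 2 ≤ c ^ 2 * B) : R ^ s * B ^ (-(s / 2)) ≤ c ^ s := by
  have hc' : c ^ s = (c ^ 2) ^ (s / 2) := by
    simpa using rpow_mul_rpow_neg_half_eq hc zero_le_one s
  rw [rpow_mul_rpow_neg_half_eq hR hB.le, hc']
  exact Real.rpow_le_rpow (by positivity) ((div_le_iff₀ hB).2 h) (by linarith)

theorem tendsto_mul_norm_rpow_mul_one_add_norm_smul_add_sq_rpow {E : Type*}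
    [NormedAddCommGroup E] [NormedSpace ℝ E] {Δ : E} (hΔ : Δ ≠ 0) (y : E) (s : ℝ) :
    Tendsto (fun l : ℝ => (l * ‖Δ‖) ^ s * (1 + ‖l • Δ + y‖ ^ 2) ^ (-(s / 2))) atTop (𝓝 1) := by
  have hΔ' : 0 < ‖Δ‖ := norm_pos_iff.2 hΔ
  set T : ℝ → ℝ := fun t => t ^ 2 + ‖‖Δ‖⁻¹ • Δ + t • y‖ ^ 2
  have hT : Tendsto (fun l : ℝ => T (l * ‖Δ‖)⁻¹) atTop (𝓝 1) := by
    have hT0 : T 0 = 1 := by simp [T, norm_smul, hΔ'.ne']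
    rw [← hT0]
    exact ((by fun_prop : Continuous T).tendsto 0).comp
      (tendsto_id.atTop_mul_const hΔ').inv_tendsto_atTop
  have hT_eq : ∀ l > 0, T (l * ‖Δ‖)⁻¹ = (1 + ‖l • Δ + y‖ ^ 2) / (l * ‖Δ‖) ^ 2 := fun l hl => by
    have : ‖Δ‖⁻¹ • Δ + (l * ‖Δ‖)⁻¹ • y = (l * ‖Δ‖)⁻¹ • (l • Δ + y) := by
      rw [smul_add, smul_smul]; congr 2; field_simp
    simp only [T, this, norm_smul, Real.norm_eq_abs, abs_inv, abs_mul, abs_of_pos hl,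
      abs_of_pos hΔ']
    field_simp
  have := (hT.inv₀ one_ne_zero).rpow_const (p := s / 2) (Or.inl (inv_ne_zero one_ne_zero))
  rw [inv_one, Real.one_rpow] at this
  refine this.congr' ?_
  filter_upwards [eventually_gt_atTop 0] with l hl
  rw [hT_eq l hl, inv_div, rpow_mul_rpow_neg_half_eq (by positivity) (by positivity)]

section OrthogonalProjection

variable {E : Type*} [NormedAddCommGroup E] [InnerProductSpace ℝ E]

theorem Submodule.norm_orthogonalProjectionOnto_orthogonal_le_norm_add (K : Submodule ℝ E)
    [K.HasOrthogonalProjection] {z : E} (hz : z ∈ K) (y : E) :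
    ‖Kᗮ.orthogonalProjectionOnto y‖ ≤ ‖z + y‖ := by
  simpa [orthogonalProjectionOnto_orthogonal_apply_eq_zero hz] using
    Kᗮ.norm_orthogonalProjectionOnto_apply_le (z + y)

variable [FiniteDimensional ℝ E] [MeasurableSpace E] [BorelSpace E]

theorem Submodule.integrable_orthogonalProjectionOnto_mul (K : Submodule ℝ E) {f : K → ℝ}
    {g : Kᗮ → ℝ} (hf : Integrable f) (hg : Integrable g) :
    Integrable fun y => f (K.orthogonalProjectionOnto y) * g (Kᗮ.orthogonalProjectionOnto y) := by
  simpa [Function.comp_def] using ((WithLp.volume_preserving_ofLp K Kᗮ).comp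
    K.orthogonalDecomposition.measurePreserving).integrable_comp_of_integrable (hf.mul_prod hg)

theorem integrable_one_add_norm_sq_inv (hE : finrank ℝ E < 2) :
    Integrable fun x : E => (1 + ‖x‖ ^ 2)⁻¹ := by
  simpa [Real.rpow_neg_one] using
    integrable_rpow_neg_one_add_norm_sq (μ := volume) (r := 2) (by exact_mod_cast hE)

end OrthogonalProjection

/-- `δ_{(0,1)}(y)^{(k+2)/(k-2)} δ_{(-z,1)}(y)`, the interaction integrand rescaled to `λ = 1`. -/
def interactionKernel {E : Type*} [NormedAddCommGroup E] (k : ℝ) (z y : E) : ℝ :=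
  (1 + ‖y‖ ^ 2) ^ (-((k + 2) / 2)) * (1 + ‖z + y‖ ^ 2) ^ (-((k - 2) / 2))

def interactionMajorant {E : Type*} [NormedAddCommGroup E] [InnerProductSpace ℝ E]
    (K : Submodule ℝ E) [K.HasOrthogonalProjection] (k : ℝ) (y : E) : ℝ :=
  2 ^ (k - 2) * ((1 + ‖K.orthogonalProjectionOnto y‖ ^ 2)⁻¹ *
    (1 + ‖Kᗮ.orthogonalProjectionOnto y‖ ^ 2) ^ (-(k / 2)) + (1 + ‖y‖ ^ 2) ^ (-((k + 2) / 2)))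

section InteractionKernel

variable {E : Type*} [NormedAddCommGroup E] {k : ℝ}

theorem interactionKernel_nonneg (k : ℝ) (z y : E) : 0 ≤ interactionKernel k z y := by
  unfold interactionKernel; positivity

theorem continuous_interactionKernel (k : ℝ) (z : E) : Continuous (interactionKernel k z) := by
  unfold interactionKernel
  refine Continuous.mul ?_ ?_ <;>
    exact Continuous.rpow_const (by fun_prop) fun _ => Or.inl (by positivity)

theorem norm_rpow_mul_interactionKernel_le_of_two_mul_norm_le (hk : 2 ≤ k) {z y : E}
    (hzy : 2 * ‖y‖ ≤ ‖z‖) :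
    ‖z‖ ^ (k - 2) * interactionKernel k z y ≤ 2 ^ (k - 2) * (1 + ‖y‖ ^ 2) ^ (-((k + 2) / 2)) := by
  have hz : ‖z‖ ≤ 2 * ‖z + y‖ := by
    have := norm_sub_le (z + y) y
    rw [add_sub_cancel_right] at this
    linarith
  have hB := rpow_mul_rpow_neg_half_le (norm_nonneg z) (by positivity : (0 : ℝ) < 1 + ‖z + y‖ ^ 2)
    zero_le_two (by linarith : (0 : ℝ) ≤ k - 2) (by nlinarith [norm_nonneg z])
  calc _ = (‖z‖ ^ (k - 2) * (1 + ‖z + y‖ ^ 2) ^ (-((k - 2) / 2))) *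
        (1 + ‖y‖ ^ 2) ^ (-((k + 2) / 2)) := by rw [interactionKernel]; ring
    _ ≤ _ := by gcongr

theorem norm_rpow_mul_interactionKernel_le_of_norm_le_two_mul [InnerProductSpace ℝ E]
    (K : Submodule ℝ E) [K.HasOrthogonalProjection] (hk : 2 ≤ k) {z : E} (hz : z ∈ K) {y : E}
    (hzy : ‖z‖ ≤ 2 * ‖y‖) :
    ‖z‖ ^ (k - 2) * interactionKernel k z y ≤
      2 ^ (k - 2) * ((1 + ‖K.orthogonalProjectionOnto y‖ ^ 2)⁻¹ *
        (1 + ‖Kᗮ.orthogonalProjectionOnto y‖ ^ 2) ^ (-(k / 2))) := by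
  set A := 1 + ‖y‖ ^ 2
  set S := 1 + ‖K.orthogonalProjectionOnto y‖ ^ 2
  set Q := 1 + ‖Kᗮ.orthogonalProjectionOnto y‖ ^ 2
  have hA : A = S + Q - 1 := by
    simp only [A, S, Q, K.norm_sq_eq_add_norm_sq_projection y]; ring
  have hS : 1 ≤ S := by simp only [S]; nlinarith [sq_nonneg ‖K.orthogonalProjectionOnto y‖]
  have hQ : 1 ≤ Q := by simp only [Q]; nlinarith [sq_nonneg ‖Kᗮ.orthogonalProjectionOnto y‖]
  have hQB : Q ≤ 1 + ‖z + y‖ ^ 2 := by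
    have := K.norm_orthogonalProjectionOnto_orthogonal_le_norm_add hz y
    simp only [Q]; gcongr
  have hzA := rpow_mul_rpow_neg_half_le (norm_nonneg z) (by positivity : (0 : ℝ) < A)
    zero_le_two (by linarith : (0 : ℝ) ≤ k - 2) (by simp only [A]; nlinarith [norm_nonneg z])
  have hA_split : A ^ (-((k + 2) / 2)) = A ^ (-((k - 2) / 2)) * (A ^ 2)⁻¹ := by
    rw [← Real.rpow_two, ← Real.rpow_neg (by positivity), ← Real.rpow_add (by positivity)]
    ring_nf
  have hQ_merge : Q⁻¹ * Q ^ (-((k - 2) / 2)) = Q ^ (-(k / 2)) := by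
    rw [← Real.rpow_neg_one, ← Real.rpow_add (by positivity)]
    ring_nf
  have hSQ : (A ^ 2)⁻¹ ≤ S⁻¹ * Q⁻¹ := by
    rw [← mul_inv]; gcongr; nlinarith
  have hBQ := Real.rpow_le_rpow_of_nonpos (by positivity) hQB (by linarith : -((k - 2) / 2) ≤ 0)
  calc _ = (‖z‖ ^ (k - 2) * A ^ (-((k - 2) / 2))) *
        ((A ^ 2)⁻¹ * (1 + ‖z + y‖ ^ 2) ^ (-((k - 2) / 2))) := by
        rw [interactionKernel, hA_split]; ring
    _ ≤ 2 ^ (k - 2) * ((S⁻¹ * Q⁻¹) * Q ^ (-((k - 2) / 2))) := by gcongr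
    _ = _ := by rw [mul_assoc, hQ_merge]

theorem norm_rpow_mul_interactionKernel_le_interactionMajorant [InnerProductSpace ℝ E]
    (K : Submodule ℝ E) [K.HasOrthogonalProjection] (hk : 2 ≤ k) {z : E} (hz : z ∈ K) (y : E) :
    ‖z‖ ^ (k - 2) * interactionKernel k z y ≤ interactionMajorant K k y := by
  rw [interactionMajorant, mul_add]
  rcases le_total ‖z‖ (2 * ‖y‖) with hzy | hzy
  · grw [norm_rpow_mul_interactionKernel_le_of_norm_le_two_mul K hk hz hzy]
    simp only [le_add_iff_nonneg_right]; positivity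
  · grw [norm_rpow_mul_interactionKernel_le_of_two_mul_norm_le hk hzy]
    simp only [le_add_iff_nonneg_left]; positivity

theorem tendsto_mul_norm_rpow_mul_interactionKernel [NormedSpace ℝ E] {Δ : E} (hΔ : Δ ≠ 0)
    (y : E) : Tendsto (fun l : ℝ => (l * ‖Δ‖) ^ (k - 2) * interactionKernel k (l • Δ) y) atTop
      (𝓝 ((1 + ‖y‖ ^ 2) ^ (-((k + 2) / 2)))) := by
  have := (tendsto_mul_norm_rpow_mul_one_add_norm_smul_add_sq_rpow hΔ y (k - 2)).const_mul
    ((1 + ‖y‖ ^ 2) ^ (-((k + 2) / 2)))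
  rw [mul_one] at this
  refine this.congr fun l => ?_
  rw [interactionKernel]; ring

variable [InnerProductSpace ℝ E] [FiniteDimensional ℝ E] [MeasurableSpace E] [BorelSpace E]

theorem integrable_interactionMajorant (hE : (finrank ℝ E : ℝ) < k + 1) {Δ : E} (hΔ : Δ ≠ 0) :
    Integrable (interactionMajorant (ℝ ∙ Δ) k) := by
  have hK : finrank ℝ (ℝ ∙ Δ) = 1 := finrank_span_singleton hΔ
  have hKperp : (finrank ℝ (ℝ ∙ Δ)ᗮ : ℝ) < k := by
    have := congrArg (Nat.cast (R := ℝ)) (Submodule.finrank_add_finrank_orthogonal (ℝ ∙ Δ))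
    push_cast [hK] at this
    linarith
  have hg : Integrable fun x : (ℝ ∙ Δ)ᗮ => (1 + ‖x‖ ^ 2) ^ (-(k / 2)) := by
    simpa only [neg_div] using integrable_rpow_neg_one_add_norm_sq (μ := volume) hKperp
  have hA : Integrable fun x : E => (1 + ‖x‖ ^ 2) ^ (-((k + 2) / 2)) := by
    simpa only [neg_div] using
      integrable_rpow_neg_one_add_norm_sq (E := E) (μ := volume) (r := k + 2) (by linarith)
  exact ((Submodule.integrable_orthogonalProjectionOnto_mul _
    (integrable_one_add_norm_sq_inv (by omega)) hg).add hA).const_mul _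

theorem tendsto_integral_mul_norm_rpow_mul_interactionKernel (hk : 2 ≤ k)
    (hE : (finrank ℝ E : ℝ) < k + 1) {Δ : E} (hΔ : Δ ≠ 0) :
    Tendsto (fun l : ℝ => ∫ y, (l * ‖Δ‖) ^ (k - 2) * interactionKernel k (l • Δ) y) atTop
      (𝓝 (∫ y : E, (1 + ‖y‖ ^ 2) ^ (-((k + 2) / 2)))) := by
  refine tendsto_integral_filter_of_dominated_convergence (interactionMajorant (ℝ ∙ Δ) k)
    (Eventually.of_forall fun l =>
      ((continuous_interactionKernel k _).const_mul _).aestronglyMeasurable)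
    ?_ (integrable_interactionMajorant hE hΔ)
    (Eventually.of_forall (tendsto_mul_norm_rpow_mul_interactionKernel hΔ))
  filter_upwards [eventually_ge_atTop 0] with l hl
  refine Eventually.of_forall fun y => ?_
  have hnorm : l * ‖Δ‖ = ‖l • Δ‖ := by rw [norm_smul, Real.norm_of_nonneg hl]
  rw [Real.norm_of_nonneg (mul_nonneg (by positivity) (interactionKernel_nonneg k _ y)), hnorm]
  exact norm_rpow_mul_interactionKernel_le_interactionMajorant _ hk
    (Submodule.smul_mem _ l (Submodule.mem_span_singleton_self Δ)) y

end InteractionKernel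

section Bubble

variable {n : ℕ} {l : ℝ}

theorem bubble_add_inv_smul (hl : 0 < l) (a z : EuclideanSpace ℝ (Fin n)) :
    bubble n a l (a + l⁻¹ • z) =
      l ^ (((n : ℝ) - 2) / 2) * (1 + ‖z‖ ^ 2) ^ (-(((n : ℝ) - 2) / 2)) := by
  have : 1 + l ^ 2 * ‖l⁻¹ • z‖ ^ 2 = 1 + ‖z‖ ^ 2 := by
    rw [norm_smul, Real.norm_eq_abs, abs_inv, abs_of_pos hl]; field_simp
  rw [bubble, add_sub_cancel_left, this, Real.rpow_neg (by positivity), div_eq_mul_inv]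

theorem bubble_rpow_mul_bubble_add_inv_smul (hn : n ≠ 2) (hl : 0 < l)
    (a₁ a₂ y : EuclideanSpace ℝ (Fin n)) :
    bubble n a₁ l (a₁ + l⁻¹ • y) ^ (((n : ℝ) + 2) / ((n : ℝ) - 2)) * bubble n a₂ l (a₁ + l⁻¹ • y) =
      l ^ n * interactionKernel n (l • (a₁ - a₂)) y := by
  have hn' : (n : ℝ) - 2 ≠ 0 := sub_ne_zero.2 (by exact_mod_cast hn)
  have hy : a₁ + l⁻¹ • y = a₂ + l⁻¹ • (l • (a₁ - a₂) + y) := by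
    rw [smul_add, smul_smul, inv_mul_cancel₀ hl.ne', one_smul]; abel
  have hp : ((n : ℝ) - 2) / 2 * (((n : ℝ) + 2) / ((n : ℝ) - 2)) = ((n : ℝ) + 2) / 2 := by
    field_simp
  have hl_pow : l ^ (((n : ℝ) + 2) / 2) * l ^ (((n : ℝ) - 2) / 2) = l ^ n := by
    rw [← Real.rpow_add hl, ← Real.rpow_natCast]; ring_nf
  rw [bubble_add_inv_smul hl, congrArg (bubble n a₂ l) hy, bubble_add_inv_smul hl,
    Real.mul_rpow (by positivity) (by positivity), ← Real.rpow_mul hl.le,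
    ← Real.rpow_mul (by positivity), neg_mul, hp, interactionKernel, ← hl_pow]
  ring

theorem integral_bubble_rpow_mul_bubble (hn : n ≠ 2) (hl : 0 < l)
    (a₁ a₂ : EuclideanSpace ℝ (Fin n)) :
    ∫ x, bubble n a₁ l x ^ (((n : ℝ) + 2) / ((n : ℝ) - 2)) * bubble n a₂ l x =
      ∫ y, interactionKernel n (l • (a₁ - a₂)) y := by
  set I := fun x => bubble n a₁ l x ^ (((n : ℝ) + 2) / ((n : ℝ) - 2)) * bubble n a₂ l x
  have hrescale : ∫ y, I (a₁ + l⁻¹ • y) = l ^ n * ∫ x, I x := by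
    rw [Measure.integral_comp_inv_smul_of_nonneg volume (fun x => I (a₁ + x)) hl.le,
      finrank_euclideanSpace_fin, integral_add_left_eq_self, smul_eq_mul]
  simp only [I, bubble_rpow_mul_bubble_add_inv_smul hn hl, integral_const_mul] at hrescale
  exact (mul_left_cancel₀ (pow_ne_zero n hl.ne') hrescale).symm

end Bubble

/-- The Bahri–Coron interaction estimate: for `a₁ ≠ a₂`, as `λ → ∞`,
`(λ|a₁−a₂|)^{n−2} ∫ δ_{(a₁,λ)}^{(n+2)/(n−2)} δ_{(a₂,λ)} → c₁ = ∫ (1+|x|²)^{−(n+2)/2}`. -/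
theorem bubble_interaction_limit (n : ℕ) (hn : 3 ≤ n)
    (a₁ a₂ : EuclideanSpace ℝ (Fin n)) (h : a₁ ≠ a₂) :
    Tendsto (fun l : ℝ =>
        (l * ‖a₁ - a₂‖) ^ ((n : ℝ) - 2) *
          ∫ x, bubble n a₁ l x ^ (((n : ℝ) + 2) / ((n : ℝ) - 2)) * bubble n a₂ l x)
      atTop
      (nhds (∫ x : EuclideanSpace ℝ (Fin n), (1 + ‖x‖ ^ 2) ^ (-(((n : ℝ) + 2) / 2)))) := by
  have hk : (2 : ℝ) ≤ n := by exact_mod_cast (by omega : 2 ≤ n)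
  refine (tendsto_integral_mul_norm_rpow_mul_interactionKernel hk (by simp)
    (sub_ne_zero.2 h)).congr' ?_
  filter_upwards [eventually_gt_atTop 0] with l hl
  rw [integral_bubble_rpow_mul_bubble (by omega) hl, integral_const_mul]
end
end

section
/- Let E be a real Hilbert space, J : E → ℝ a differentiable function with gradient ∇J, and let η : [s₀, t₀] → E (s₀ < t₀) be differentiable with η′(s) = −∇J(η(s)) for all s ∈ [s₀, t₀]. Suppose there are constants γ > 0, M₀ > 0, β > 0 such that for all s ∈ [s₀, t₀], γ ≤ ‖∇J(η(s))‖² and ‖∇J(η(s))‖ ≤ M₀, and suppose ‖η(t₀) − η(s₀)‖ ≥ β. Then t₀ − s₀ ≥ β/M₀ and J(η(t₀)) − J(η(s₀)) ≤ −γβ/M₀. -/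
/-! The flow moves at speed `‖∇J‖ ≤ M₀`, so covering the distance `β` takes time at least `β / M₀`;
meanwhile `J ∘ η` has derivative `-‖∇J‖² ≤ -γ`, so `J` drops by at least `γ` times that time. -/

open Set

section
variable {E : Type*} [NormedAddCommGroup E] [InnerProductSpace ℝ E] [CompleteSpace E]

theorem HasGradientAt.comp_hasDerivAt {f : E → ℝ} {g : E} {c : ℝ → E} {v : E} {t : ℝ}
    (hf : HasGradientAt f g (c t)) (hc : HasDerivAt c v t) :
    HasDerivAt (f ∘ c) (inner ℝ g v) t := by
  simpa using hf.hasFDerivAt.comp_hasDerivAt t hc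

theorem hasDerivAt_comp_of_hasDerivAt_neg_gradient {f : E → ℝ} {c : ℝ → E} {t : ℝ}
    (hf : DifferentiableAt ℝ f (c t)) (hc : HasDerivAt c (-gradient f (c t)) t) :
    HasDerivAt (f ∘ c) (-‖gradient f (c t)‖ ^ 2) t := by
  simpa [inner_neg_right, real_inner_self_eq_norm_sq] using hf.hasGradientAt.comp_hasDerivAt hc

end

theorem image_sub_le_mul_sub_of_hasDerivAt_le {f f' : ℝ → ℝ} {a b C : ℝ} (hab : a < b)
    (hf : ∀ x ∈ Icc a b, HasDerivAt f (f' x) x) (hf'_le : ∀ x ∈ Icc a b, f' x ≤ C) :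
    f b - f a ≤ C * (b - a) := by
  obtain ⟨c, hc, hslope⟩ := exists_hasDerivAt_eq_slope f f' hab
    (fun x hx => (hf x hx).continuousAt.continuousWithinAt)
    (fun x hx => hf x (Ioo_subset_Icc_self hx))
  rw [← div_le_iff₀ (sub_pos.2 hab), ← hslope]
  exact hf'_le c (Ioo_subset_Icc_self hc)

theorem gradient_flow_descent_general {E : Type*} [NormedAddCommGroup E] [InnerProductSpace ℝ E]
    [CompleteSpace E] (J : E → ℝ) (hJ : Differentiable ℝ J)
    (s₀ t₀ : ℝ) (hst : s₀ < t₀) (η : ℝ → E)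
    (hη : ∀ s ∈ Set.Icc s₀ t₀, HasDerivAt η (-gradient J (η s)) s)
    (γ M₀ β : ℝ) (hγ : 0 < γ)
    (hlow : ∀ s ∈ Set.Icc s₀ t₀, γ ≤ ‖gradient J (η s)‖ ^ 2)
    (hup : ∀ s ∈ Set.Icc s₀ t₀, ‖gradient J (η s)‖ ≤ M₀)
    (hdist : β ≤ ‖η t₀ - η s₀‖) :
    β / M₀ ≤ t₀ - s₀ ∧ J (η t₀) - J (η s₀) ≤ -(γ * β / M₀) := by
  have hs₀ : s₀ ∈ Icc s₀ t₀ := left_mem_Icc.2 hst.le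
  have hM₀ : 0 ≤ M₀ := (norm_nonneg _).trans (hup s₀ hs₀)
  have hspeed : ‖η t₀ - η s₀‖ ≤ M₀ * (t₀ - s₀) :=
    norm_image_sub_le_of_norm_deriv_le_segment' (fun s hs => (hη s hs).hasDerivWithinAt)
      (fun s hs => by simpa using hup s (Ico_subset_Icc_self hs)) t₀ (right_mem_Icc.2 hst.le)
  have htime : β / M₀ ≤ t₀ - s₀ :=
    div_le_of_le_mul₀ hM₀ (sub_nonneg.2 hst.le) (by linarith)
  have henergy : J (η t₀) - J (η s₀) ≤ -γ * (t₀ - s₀) :=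
    image_sub_le_mul_sub_of_hasDerivAt_le (f := J ∘ η) hst
      (fun s hs => hasDerivAt_comp_of_hasDerivAt_neg_gradient (hJ _) (hη s hs))
      (fun s hs => neg_le_neg (hlow s hs))
  refine ⟨htime, ?_⟩
  calc J (η t₀) - J (η s₀) ≤ -γ * (t₀ - s₀) := henergy
    _ ≤ -γ * (β / M₀) := mul_le_mul_of_nonpos_left htime (neg_nonpos.2 hγ.le)
    _ = -(γ * β / M₀) := by ring

/-- Quantitative descent along a negative gradient flow line: if on `[s₀,t₀]` the gradient
satisfies `γ ≤ ‖∇J‖²` and `‖∇J‖ ≤ M₀`, and the endpoints of the flow line are at distance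
at least `β`, then `t₀ − s₀ ≥ β/M₀` and `J(η(t₀)) − J(η(s₀)) ≤ −γβ/M₀`. -/
theorem gradient_flow_descent {E : Type*} [NormedAddCommGroup E] [InnerProductSpace ℝ E]
    [CompleteSpace E] (J : E → ℝ) (hJ : Differentiable ℝ J)
    (s₀ t₀ : ℝ) (hst : s₀ < t₀) (η : ℝ → E)
    (hη : ∀ s ∈ Set.Icc s₀ t₀, HasDerivAt η (-gradient J (η s)) s)
    (γ M₀ β : ℝ) (hγ : 0 < γ) (hM₀ : 0 < M₀) (hβ : 0 < β)
    (hlow : ∀ s ∈ Set.Icc s₀ t₀, γ ≤ ‖gradient J (η s)‖ ^ 2)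
    (hup : ∀ s ∈ Set.Icc s₀ t₀, ‖gradient J (η s)‖ ≤ M₀)
    (hdist : β ≤ ‖η t₀ - η s₀‖) :
    β / M₀ ≤ t₀ - s₀ ∧ J (η t₀) - J (η s₀) ≤ -(γ * β / M₀) :=
  gradient_flow_descent_general J hJ s₀ t₀ hst η hη γ M₀ β hγ hlow hup hdist
end
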